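/- (Exact Relaxation, Proposition 3.9.) Let f be a multi-form of multidegree 2τ with τ_i ≥ 1 for all i. Suppose y* is an optimal solution of the DNN relaxation: y* is feasible (M(y*) positive semidefinite, M(y*) entrywise nonnegative, Σ_α g_α y*_α = 1), Σ_α f_α y*_α ≤ Σ_α f_α y_α for every feasible y, and rank M(y*) = 1. Then the relaxation is tight, f_dnn = f_min, and an optimal solution of the original problem can be extracted: there exists x* in the nonnegative multi-sphere with f(x*) = f_dnn. -/

import Mathlib

open MvPolynomial Finset

/-- Grouped multi-indices of multidegree `τ`. -/
def Lam {p : ℕ} (n τ : Fin p → ℕ) : Type :=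
  {β : ∀ i : Fin p, Fin (n i) → ℕ // ∀ i, ∑ j, β i j = τ i}

theorem Lam.entry_le {p : ℕ} {n τ : Fin p → ℕ} (β : Lam n τ) (i : Fin p) (j : Fin (n i)) :
    β.1 i j < τ i + 1 := by
  refine Nat.lt_succ_of_le ?_
  have h := Finset.single_le_sum (f := fun j' => β.1 i j') (fun _ _ => Nat.zero_le _)
    (Finset.mem_univ j)
  exact h.trans (le_of_eq (β.2 i))

noncomputable instance {p : ℕ} (n τ : Fin p → ℕ) : Fintype (Lam n τ) :=
  Fintype.ofInjective
    (fun β : Lam n τ =>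
      (fun i j => (⟨β.1 i j, β.entry_le i j⟩ : Fin (τ i + 1)) :
        ∀ i : Fin p, Fin (n i) → Fin (τ i + 1)))
    (by
      intro β γ h
      apply Subtype.ext
      funext i j
      exact congrArg Fin.val (congrFun (congrFun h i) j))

/-- Sum of two grouped multi-indices of the same multidegree `τ`, of multidegree `2τ`. -/
def Lam.add2 {p : ℕ} {n τ : Fin p → ℕ} (β γ : Lam n τ) : Lam n (fun i => 2 * τ i) :=
  ⟨fun i j => β.1 i j + γ.1 i j, fun i => by
    rw [Finset.sum_add_distrib, β.2 i, γ.2 i]; ring⟩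

/-- The value of the monomial `x^β`. -/
noncomputable def Lam.mono {p : ℕ} {n τ : Fin p → ℕ} (β : Lam n τ)
    (x : ∀ i : Fin p, Fin (n i) → ℝ) : ℝ :=
  ∏ i, ∏ j, x i j ^ β.1 i j

/-- The exponent Finsupp corresponding to a grouped multi-index. -/
noncomputable def Lam.toFinsupp {p : ℕ} {n τ : Fin p → ℕ} (β : Lam n τ) :
    (Σ i : Fin p, Fin (n i)) →₀ ℕ :=
  Finsupp.equivFunOnFinite.symm (fun q => β.1 q.1 q.2)

/-- `f` is a multi-form of multidegree `d`. -/
def IsMultiForm {p : ℕ} {n : Fin p → ℕ} (f : MvPolynomial (Σ i : Fin p, Fin (n i)) ℝ)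
    (d : Fin p → ℕ) : Prop :=
  ∀ m ∈ f.support, ∀ i : Fin p, ∑ j, m ⟨i, j⟩ = d i

/-- Evaluation of a polynomial at a grouped point. -/
noncomputable def evalAt {p : ℕ} {n : Fin p → ℕ} (x : ∀ i : Fin p, Fin (n i) → ℝ)
    (f : MvPolynomial (Σ i : Fin p, Fin (n i)) ℝ) : ℝ :=
  MvPolynomial.eval (fun q : Σ i : Fin p, Fin (n i) => x q.1 q.2) f

/-- The nonnegative multi-sphere. -/
def NonnegSphere {p : ℕ} {n : Fin p → ℕ} (x : ∀ i : Fin p, Fin (n i) → ℝ) : Prop :=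
  ∀ i, (∀ j, 0 ≤ x i j) ∧ ∑ j, (x i j) ^ 2 = 1

/-- The multi-form `g(x) = ∏ i (∑ j (x⁽ⁱ⁾ⱼ)²)^{τ i}`. -/
noncomputable def gPoly {p : ℕ} (n τ : Fin p → ℕ) :
    MvPolynomial (Σ i : Fin p, Fin (n i)) ℝ :=
  ∏ i, (∑ j, (X (⟨i, j⟩ : Σ i : Fin p, Fin (n i)) : MvPolynomial (Σ i : Fin p, Fin (n i)) ℝ) ^ 2) ^ τ i

/-- The moment matrix of `y : Λ_{2τ} → ℝ`. -/
def momentMatrix {p : ℕ} {n τ : Fin p → ℕ} (y : Lam n (fun i => 2 * τ i) → ℝ) :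
    Matrix (Lam n τ) (Lam n τ) ℝ :=
  Matrix.of fun β γ => y (β.add2 γ)

/-- Feasibility for the (zero-th order) DNN relaxation: the moment matrix is positive
semidefinite and entrywise nonnegative and `Σ_α g_α y_α = 1`. -/
def DNNFeasible {p : ℕ} {n : Fin p → ℕ} (τ : Fin p → ℕ)
    (y : Lam n (fun i => 2 * τ i) → ℝ) : Prop :=
  (momentMatrix y).PosSemidef ∧ (∀ β γ : Lam n τ, 0 ≤ momentMatrix y β γ) ∧
    (∑ α : Lam n (fun i => 2 * τ i), (gPoly n τ).coeff α.toFinsupp * y α) = 1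

/-- The objective `Σ_α f_α y_α` of the DNN relaxation. -/
noncomputable def DNNObj {p : ℕ} {n : Fin p → ℕ} (τ : Fin p → ℕ)
    (f : MvPolynomial (Σ i : Fin p, Fin (n i)) ℝ)
    (y : Lam n (fun i => 2 * τ i) → ℝ) : ℝ :=
  ∑ α : Lam n (fun i => 2 * τ i), f.coeff α.toFinsupp * y α


/-!
A rank-one moment matrix that is positive semidefinite and entrywise nonnegative factors as
`w wᵀ` with `w ≥ 0`, so `y_{β+γ} = w_β w_γ`. Since `w_β w_γ` depends only on `β + γ`, moving one
unit of exponent inside a group changes `w` by a fixed ratio; walking from any `β` to the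
multi-index concentrated at reference positions shows `w_β = c · x^β` for a nonnegative point `x`.
Hence `y = c² (x^α)_α`, and the normalization `Σ_α g_α y_α = 1` lets us rescale `x` onto the
nonnegative multi-sphere with `y` its exact moment vector. Then `f(x) = Σ_α f_α y_α = f_dnn`,
while the moment vector of any point of the nonnegative multi-sphere is feasible, so
`f_dnn ≤ f_min`.
-/

theorem Nat.exists_le_and_sum_eq {ι : Type*} [Fintype ι] (m : ι → ℕ) {t : ℕ}
    (ht : t ≤ ∑ j, m j) : ∃ a ≤ m, ∑ j, a j = t := by
  classical
  induction t with
  | zero => exact ⟨0, fun _ => Nat.zero_le _, by simp⟩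
  | succ t ih =>
    obtain ⟨a, hle, hsum⟩ := ih (Nat.le_of_succ_le ht)
    obtain ⟨j, hj⟩ : ∃ j, a j < m j := by
      by_contra! hc
      have := Finset.sum_le_sum fun j (_ : j ∈ Finset.univ) => hc j
      omega
    refine ⟨a + Pi.single j 1, fun k => ?_, by simp [Finset.sum_add_distrib, hsum]⟩
    rcases eq_or_ne k j with rfl | hk
    · simpa using hj
    · simpa [hk] using hle k

theorem Matrix.mul_mul_eq_mul_mul_of_rank_le_one {m n K : Type*} [Fintype n] [Field K]
    {A : Matrix m n K} (hA : A.rank ≤ 1) (i j k l) :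
    A i j * A k l = A k j * A i l := by
  have := FiniteDimensional.span_of_finite K (Set.finite_range A.col)
  rw [Matrix.rank_eq_finrank_span_cols, finrank_le_one_iff] at hA
  obtain ⟨v, hv⟩ := hA
  have hcol (j : n) : ∃ c : K, ∀ i, A i j = c * (v : m → K) i := by
    obtain ⟨c, hc⟩ := hv ⟨A.col j, Submodule.subset_span ⟨j, rfl⟩⟩
    exact ⟨c, fun i => by simpa using (congrFun (congrArg Subtype.val hc) i).symm⟩
  obtain ⟨c, hc⟩ := hcol j
  obtain ⟨d, hd⟩ := hcol l
  rw [hc, hc, hd, hd]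
  ring

theorem Matrix.exists_nonneg_eq_vecMulVec_of_rank_le_one {m : Type*} [Fintype m]
    {A : Matrix m m ℝ} (hsymm : A.IsSymm) (hnn : ∀ i j, 0 ≤ A i j) (hA : A.rank ≤ 1) :
    ∃ w : m → ℝ, 0 ≤ w ∧ A = vecMulVec w w := by
  have hminor := Matrix.mul_mul_eq_mul_mul_of_rank_le_one hA
  by_cases hdiag : ∃ k, A k k ≠ 0
  · obtain ⟨k, hk⟩ := hdiag
    have hkpos : 0 < A k k := (hnn k k).lt_of_ne' hk
    refine ⟨fun i => A i k / √(A k k), fun i => div_nonneg (hnn i k) (Real.sqrt_nonneg _), ?_⟩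
    ext i j
    rw [vecMulVec_apply, div_mul_div_comm, Real.mul_self_sqrt hkpos.le, eq_div_iff hk,
      hsymm.apply k j, hminor, mul_comm]
  · push Not at hdiag
    refine ⟨0, le_rfl, ?_⟩
    ext i j
    have h := hminor i j j i
    rw [hsymm.apply i j, hdiag, hdiag, mul_zero] at h
    simpa using h

section

variable {p : ℕ} {n τ : Fin p → ℕ}

namespace Lam

theorem toFinsupp_injective : Function.Injective (toFinsupp (n := n) (τ := τ)) :=
  fun _ _ h => Subtype.ext <| funext fun i => funext fun j => DFunLike.congr_fun h ⟨i, j⟩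

theorem mono_eq_prod_toFinsupp (β : Lam n τ) (x : ∀ i : Fin p, Fin (n i) → ℝ) :
    β.mono x = ∏ q : Σ i : Fin p, Fin (n i), x q.1 q.2 ^ β.toFinsupp q := by
  rw [mono, ← Finset.univ_sigma_univ, Finset.prod_sigma]
  rfl

theorem mono_add2 (β γ : Lam n τ) (x : ∀ i : Fin p, Fin (n i) → ℝ) :
    (β.add2 γ).mono x = β.mono x * γ.mono x := by
  simp only [mono, add2, pow_add, Finset.prod_mul_distrib]

theorem mono_nonneg (β : Lam n τ) {x : ∀ i : Fin p, Fin (n i) → ℝ} (hx : ∀ i j, 0 ≤ x i j) :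
    0 ≤ β.mono x :=
  Finset.prod_nonneg fun i _ => Finset.prod_nonneg fun j _ => pow_nonneg (hx i j) _

theorem mono_mul_left (β : Lam n τ) (t : Fin p → ℝ) (x : ∀ i : Fin p, Fin (n i) → ℝ) :
    β.mono (fun i j => t i * x i j) = (∏ i, t i ^ τ i) * β.mono x := by
  simp only [mono, mul_pow, Finset.prod_mul_distrib, Finset.prod_pow_eq_pow_sum, β.2]

theorem exists_add2_eq (α : Lam n (fun i => 2 * τ i)) : ∃ β γ : Lam n τ, β.add2 γ = α := by
  have hα (i : Fin p) : ∑ j, α.1 i j = 2 * τ i := α.2 i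
  choose a hle hsum using fun i =>
    Nat.exists_le_and_sum_eq (α.1 i) (t := τ i) (by rw [hα i]; omega)
  refine ⟨⟨a, hsum⟩, ⟨α.1 - a, fun i => ?_⟩, Subtype.ext <| funext fun i => funext fun j => ?_⟩
  · simp only [Pi.sub_apply]
    rw [Finset.sum_tsub_distrib _ fun j _ => hle i j, hsum i, hα i]
    omega
  · have : a i j ≤ α.1 i j := hle i j
    simp only [add2, Pi.sub_apply]
    omega

theorem entry_add_entry_le (β : Lam n τ) (i : Fin p) {j k : Fin (n i)} (hjk : j ≠ k) :
    β.1 i j + β.1 i k ≤ τ i := by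
  rw [← Finset.sum_pair hjk, ← β.2 i]
  exact Finset.sum_le_sum_of_subset (Finset.subset_univ _)

def conc (τ : Fin p → ℕ) (m : ∀ i, Fin (n i)) : Lam n τ :=
  ⟨fun i => Pi.single (m i) (τ i), fun i => by simp⟩

theorem mono_conc (m : ∀ i, Fin (n i)) (x : ∀ i : Fin p, Fin (n i) → ℝ) :
    (conc τ m).mono x = ∏ i, x i (m i) ^ τ i := by
  simp [mono, conc, Pi.single_apply, pow_ite]

def move (β : Lam n τ) (i : Fin p) (src dst : Fin (n i)) (h : 1 ≤ β.1 i src) : Lam n τ :=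
  ⟨Function.update β.1 i (β.1 i + Pi.single dst 1 - Pi.single src 1), fun i' => by
    rcases eq_or_ne i' i with rfl | hi
    · have hle (j : Fin (n i')) (_ : j ∈ Finset.univ) : (Pi.single src 1 : Fin (n i') → ℕ) j ≤
          β.1 i' j + (Pi.single dst 1 : Fin (n i') → ℕ) j := by
        rcases eq_or_ne j src with rfl | hj
        · simpa using h.trans (Nat.le_add_right _ _)
        · simp [hj]
      simp only [Function.update_self, Pi.sub_apply, Pi.add_apply]
      rw [Finset.sum_tsub_distrib _ hle, Finset.sum_add_distrib, β.2, Finset.sum_pi_single',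
        Finset.sum_pi_single']
      simp
    · rw [Function.update_of_ne hi, β.2]⟩

section Move

variable (β : Lam n τ) (i : Fin p) (src dst : Fin (n i)) (h : 1 ≤ β.1 i src)

theorem move_apply_self :
    (β.move i src dst h).1 i = β.1 i + Pi.single dst 1 - Pi.single src 1 :=
  Function.update_self ..

theorem move_apply_of_ne {i' : Fin p} (hi : i' ≠ i) : (β.move i src dst h).1 i' = β.1 i' :=
  Function.update_of_ne hi ..

theorem move_apply_dst (hne : src ≠ dst) : (β.move i src dst h).1 i dst = β.1 i dst + 1 := by
  simp [move_apply_self, hne.symm]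

theorem move_self : β.move i src src h = β :=
  Subtype.ext <| Function.update_eq_self_iff.mpr (by simp)

theorem add2_move_move (γ : Lam n τ) (hγ : 1 ≤ γ.1 i dst) :
    (β.move i src dst h).add2 (γ.move i dst src hγ) = β.add2 γ := by
  apply Subtype.ext
  funext i' j
  rcases eq_or_ne i' i with rfl | hi
  · simp only [add2, move_apply_self, Pi.sub_apply, Pi.add_apply, Pi.single_apply]
    split_ifs <;> subst_vars <;> omega
  · simp only [add2, move_apply_of_ne _ _ _ _ _ hi]

theorem mono_move (x : ∀ i : Fin p, Fin (n i) → ℝ) :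
    (β.move i src dst h).mono x * x i src = β.mono x * x i dst := by
  have hgroup : (∏ j, x i j ^ (β.move i src dst h).1 i j) * x i src
      = (∏ j, x i j ^ β.1 i j) * x i dst := by
    have hpow (k : Fin (n i)) : ∏ j, x i j ^ (Pi.single k 1 : Fin (n i) → ℕ) j = x i k := by
      simp [Pi.single_apply, pow_ite]
    rw [← hpow src, ← hpow dst, ← Finset.prod_mul_distrib, ← Finset.prod_mul_distrib]
    refine Finset.prod_congr rfl fun j _ => ?_
    rw [← pow_add, ← pow_add, move_apply_self]
    congr 1
    simp only [Pi.sub_apply, Pi.add_apply, Pi.single_apply]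
    split_ifs <;> subst_vars <;> omega
  have hrest : ∏ i' ∈ Finset.univ.erase i, ∏ j, x i' j ^ (β.move i src dst h).1 i' j
      = ∏ i' ∈ Finset.univ.erase i, ∏ j, x i' j ^ β.1 i' j :=
    Finset.prod_congr rfl fun i' hi' => by
      rw [move_apply_of_ne _ _ _ _ _ (Finset.ne_of_mem_erase hi')]
  rw [mono, mono, ← Finset.mul_prod_erase _ _ (Finset.mem_univ i),
    ← Finset.mul_prod_erase _ _ (Finset.mem_univ i), hrest]
  linear_combination (∏ i' ∈ Finset.univ.erase i, ∏ j, x i' j ^ β.1 i' j) * hgroup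

end Move

theorem induction_move (m : ∀ i, Fin (n i)) {P : Lam n τ → Prop} (base : P (conc τ m))
    (step : ∀ β i j (h : 1 ≤ β.1 i j), P (β.move i j (m i) h) → P β) (β : Lam n τ) : P β := by
  induction β using
    (InvImage.wf (fun β : Lam n τ => ∑ i, (τ i - β.1 i (m i))) wellFounded_lt).induction with
  | _ β ih =>
  by_cases hmove : ∃ i j, j ≠ m i ∧ 1 ≤ β.1 i j
  · obtain ⟨i, j, hj, h⟩ := hmove
    refine step β i j h (ih _ (Finset.sum_lt_sum (fun i' _ => ?_) ⟨i, Finset.mem_univ _, ?_⟩))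
    · rcases eq_or_ne i' i with rfl | hi
      · rw [move_apply_dst _ _ _ _ _ hj]
        omega
      · rw [move_apply_of_ne _ _ _ _ _ hi]
    · have := β.entry_add_entry_le i hj
      rw [move_apply_dst _ _ _ _ _ hj]
      omega
  · push Not at hmove
    convert base
    apply Subtype.ext
    funext i j
    have hzero (j : Fin (n i)) (hj : j ≠ m i) : β.1 i j = 0 := by
      have := hmove i j hj
      omega
    rcases eq_or_ne j (m i) with rfl | hj
    · rw [← Fintype.sum_eq_single _ hzero, β.2 i]
      simp [conc]
    · simp [conc, hj, hzero j hj]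

theorem exists_eq_mul_mono (hτ : ∀ i, 1 ≤ τ i) {w : Lam n τ → ℝ} (hw0 : 0 ≤ w)
    (hw : ∀ β γ δ ε : Lam n τ, β.add2 γ = δ.add2 ε → w β * w γ = w δ * w ε) :
    ∃ (c : ℝ) (x : ∀ i : Fin p, Fin (n i) → ℝ), (∀ i j, 0 ≤ x i j) ∧
      ∀ β, w β = c * β.mono x := by
  by_cases hzero : w = 0
  · exact ⟨0, 0, fun _ _ => le_rfl, fun β => by simp [hzero]⟩
  obtain ⟨β₀, hβ₀⟩ := Function.ne_iff.mp hzero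
  have hpos (i : Fin p) : ∃ j, 1 ≤ β₀.1 i j := by
    obtain ⟨j, -, hj⟩ := Finset.exists_ne_zero_of_sum_ne_zero (s := Finset.univ) (f := β₀.1 i)
      (by rw [β₀.2 i]; exact Nat.one_le_iff_ne_zero.mp (hτ i))
    exact ⟨j, Nat.one_le_iff_ne_zero.mpr hj⟩
  choose m hm using hpos
  set x : ∀ i : Fin p, Fin (n i) → ℝ := fun i j => w (β₀.move i (m i) j (hm i))
  have hxm (i : Fin p) : x i (m i) = w β₀ := congrArg w (move_self β₀ i (m i) (hm i))
  have key (β : Lam n τ) : w β * w β₀ ^ ∑ i, τ i = w (conc τ m) * β.mono x := by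
    induction β using induction_move m with
    | base =>
      rw [mono_conc, ← Finset.prod_pow_eq_pow_sum]
      simp only [hxm]
    | step β i j h ih =>
      have hex : w β * w β₀ = w (β.move i j (m i) h) * x i j :=
        hw _ _ _ _ (add2_move_move β i j (m i) h β₀ (hm i)).symm
      have hmono := β.mono_move i j (m i) h x
      rw [hxm] at hmono
      apply mul_right_cancel₀ hβ₀
      calc w β * w β₀ ^ (∑ i, τ i) * w β₀
          = w (β.move i j (m i) h) * w β₀ ^ (∑ i, τ i) * x i j := by
            linear_combination w β₀ ^ (∑ i, τ i) * hex
        _ = w (conc τ m) * ((β.move i j (m i) h).mono x * x i j) := by rw [ih]; ring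
        _ = w (conc τ m) * β.mono x * w β₀ := by rw [hmono]; ring
  refine ⟨w (conc τ m) / w β₀ ^ ∑ i, τ i, x, fun i j => hw0 _, fun β => ?_⟩
  rw [div_mul_eq_mul_div, eq_div_iff (pow_ne_zero _ hβ₀), key]

end Lam

def groupWeight (q : Σ i : Fin p, Fin (n i)) : Fin p → ℕ := Pi.single q.1 1

theorem weight_groupWeight_apply (m : (Σ i : Fin p, Fin (n i)) →₀ ℕ) (i : Fin p) :
    Finsupp.weight groupWeight m i = ∑ j, m ⟨i, j⟩ := by
  rw [Finsupp.weight_apply, Finsupp.sum_fintype _ _ (by simp), Finset.sum_apply,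
    ← Finset.univ_sigma_univ, Finset.sum_sigma, Finset.sum_eq_single i]
  · simp [groupWeight]
  · intro i' _ hi'
    simp [groupWeight, hi'.symm]
  · simp

theorem isMultiForm_iff_isWeightedHomogeneous {f : MvPolynomial (Σ i : Fin p, Fin (n i)) ℝ}
    {d : Fin p → ℕ} : IsMultiForm f d ↔ IsWeightedHomogeneous groupWeight f d := by
  simp only [IsMultiForm, IsWeightedHomogeneous, mem_support_iff, funext_iff,
    weight_groupWeight_apply]

theorem gPoly_isMultiForm (τ : Fin p → ℕ) : IsMultiForm (gPoly n τ) (fun i => 2 * τ i) := by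
  rw [isMultiForm_iff_isWeightedHomogeneous, gPoly]
  have hsq (i : Fin p) : IsWeightedHomogeneous groupWeight
      (∑ j, (X ⟨i, j⟩ : MvPolynomial (Σ i : Fin p, Fin (n i)) ℝ) ^ 2) (2 • Pi.single i 1) :=
    IsWeightedHomogeneous.sum _ _ _ fun j _ => (isWeightedHomogeneous_X ℝ _ _).pow 2
  convert IsWeightedHomogeneous.prod Finset.univ _ _ fun i _ => (hsq i).pow (τ i) using 1
  funext i
  rw [Finset.sum_apply]
  simp [Pi.single_apply, mul_comm]

theorem evalAt_gPoly (τ : Fin p → ℕ) (x : ∀ i : Fin p, Fin (n i) → ℝ) :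
    evalAt x (gPoly n τ) = ∏ i, (∑ j, x i j ^ 2) ^ τ i := by
  simp [evalAt, gPoly]

theorem IsMultiForm.sum_coeff_mul_mono {f : MvPolynomial (Σ i : Fin p, Fin (n i)) ℝ}
    {d : Fin p → ℕ} (hf : IsMultiForm f d) (x : ∀ i : Fin p, Fin (n i) → ℝ) :
    ∑ α : Lam n d, f.coeff α.toFinsupp * α.mono x = evalAt x f := by
  rw [evalAt, MvPolynomial.eval_eq']
  refine Finset.sum_bij_ne_zero (fun α _ _ => α.toFinsupp) ?_ ?_ ?_ ?_
  · intro α _ hα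
    exact mem_support_iff.mpr (left_ne_zero_of_mul hα)
  · intro α _ _ β _ _ h
    exact Lam.toFinsupp_injective h
  · intro m hm hne
    let α : Lam n d := ⟨fun i j => m ⟨i, j⟩, hf m hm⟩
    have hα : α.toFinsupp = m := by ext; rfl
    exact ⟨α, Finset.mem_univ _, by rwa [Lam.mono_eq_prod_toFinsupp, hα], hα⟩
  · intro α _ _
    rw [Lam.mono_eq_prod_toFinsupp]

theorem momentMatrix_mono (x : ∀ i : Fin p, Fin (n i) → ℝ) :
    momentMatrix (fun α : Lam n (fun i => 2 * τ i) => α.mono x)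
      = Matrix.vecMulVec (fun β : Lam n τ => β.mono x) (fun β => β.mono x) := by
  ext β γ
  exact Lam.mono_add2 β γ x

theorem dnnFeasible_mono {x : ∀ i : Fin p, Fin (n i) → ℝ} (hx : NonnegSphere x) :
    DNNFeasible τ (fun α : Lam n (fun i => 2 * τ i) => α.mono x) := by
  have hx0 (i) (j) : 0 ≤ x i j := (hx i).1 j
  refine ⟨?_, fun β γ => ?_, ?_⟩
  · rw [momentMatrix_mono]
    simpa using Matrix.posSemidef_vecMulVec_self_star fun β : Lam n τ => β.mono x
  · rw [momentMatrix_mono, Matrix.vecMulVec_apply]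
    exact mul_nonneg (β.mono_nonneg hx0) (γ.mono_nonneg hx0)
  · rw [(gPoly_isMultiForm τ).sum_coeff_mul_mono, evalAt_gPoly]
    simp [(hx _).2]

theorem exists_nonnegSphere_mono_eq (hτ : ∀ i, 1 ≤ τ i) {x : ∀ i : Fin p, Fin (n i) → ℝ}
    (hx0 : ∀ i j, 0 ≤ x i j) {c : ℝ} (hc : c * evalAt x (gPoly n τ) = 1) :
    ∃ z, NonnegSphere z ∧ ∀ α : Lam n (fun i => 2 * τ i), α.mono z = c * α.mono x := by
  set s : Fin p → ℝ := fun i => ∑ j, x i j ^ 2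
  rw [evalAt_gPoly] at hc
  have hspos (i : Fin p) : 0 < s i := by
    refine (Finset.sum_nonneg fun j _ => sq_nonneg (x i j)).lt_of_ne' fun hsi => ?_
    rw [Finset.prod_eq_zero (Finset.mem_univ i)
      (by simp [hsi, Nat.pos_iff_ne_zero.mp (hτ i)]), mul_zero] at hc
    exact zero_ne_one hc
  refine ⟨fun i j => (√(s i))⁻¹ * x i j, fun i => ⟨fun j => ?_, ?_⟩, fun α => ?_⟩
  · exact mul_nonneg (inv_nonneg.mpr (Real.sqrt_nonneg _)) (hx0 i j)
  · simp only [mul_pow, ← Finset.mul_sum, inv_pow, Real.sq_sqrt (hspos i).le]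
    exact inv_mul_cancel₀ (hspos i).ne'
  · rw [α.mono_mul_left, eq_inv_of_mul_eq_one_left hc, ← Finset.prod_inv_distrib]
    congr 1
    refine Finset.prod_congr rfl fun i _ => ?_
    rw [pow_mul, inv_pow, Real.sq_sqrt (hspos i).le, inv_pow]

theorem DNNFeasible.exists_nonnegSphere_of_rank_eq_one (hτ : ∀ i, 1 ≤ τ i)
    {y : Lam n (fun i => 2 * τ i) → ℝ} (hy : DNNFeasible τ y)
    (hrank : (momentMatrix y).rank = 1) :
    ∃ x, NonnegSphere x ∧ y = fun α => α.mono x := by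
  obtain ⟨hpsd, hnn, hg⟩ := hy
  obtain ⟨w, hw0, hM⟩ := Matrix.exists_nonneg_eq_vecMulVec_of_rank_le_one
    (Matrix.isHermitian_iff_isSymm.mp hpsd.1) hnn hrank.le
  have hyw (β γ : Lam n τ) : y (β.add2 γ) = w β * w γ := congrFun (congrFun hM β) γ
  obtain ⟨c, x, hx0, hwx⟩ :=
    Lam.exists_eq_mul_mono hτ hw0 fun β γ δ ε h => by rw [← hyw, ← hyw, h]
  have hyx (α : Lam n (fun i => 2 * τ i)) : y α = c ^ 2 * α.mono x := by
    obtain ⟨β, γ, rfl⟩ := α.exists_add2_eq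
    rw [hyw, hwx, hwx, Lam.mono_add2]
    ring
  have hc : c ^ 2 * evalAt x (gPoly n τ) = 1 := by
    rw [← (gPoly_isMultiForm τ).sum_coeff_mul_mono, Finset.mul_sum, ← hg]
    exact Finset.sum_congr rfl fun α _ => by rw [hyx]; ring
  obtain ⟨z, hz, hzx⟩ := exists_nonnegSphere_mono_eq hτ hx0 hc
  exact ⟨z, hz, funext fun α => (hyx α).trans (hzx α).symm⟩

end

theorem dnn_exact_relaxation_general (p : ℕ)
    (n : Fin p → ℕ) (τ : Fin p → ℕ) (hτ : ∀ i, 1 ≤ τ i)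
    (f : MvPolynomial (Σ i : Fin p, Fin (n i)) ℝ)
    (hf : IsMultiForm f (fun i => 2 * τ i))
    (ystar : Lam n (fun i => 2 * τ i) → ℝ)
    (hfeas : DNNFeasible τ ystar)
    (hopt : ∀ y, DNNFeasible τ y → DNNObj τ f ystar ≤ DNNObj τ f y)
    (hrank : (momentMatrix ystar).rank = 1) :
    ∃ xstar : ∀ i : Fin p, Fin (n i) → ℝ, NonnegSphere xstar ∧
      evalAt xstar f = DNNObj τ f ystar ∧
      ∀ x : ∀ i : Fin p, Fin (n i) → ℝ, NonnegSphere x → evalAt xstar f ≤ evalAt x f := by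
  obtain ⟨xstar, hxstar, rfl⟩ := hfeas.exists_nonnegSphere_of_rank_eq_one hτ hrank
  have hobj (x : ∀ i : Fin p, Fin (n i) → ℝ) :
      DNNObj τ f (fun α => α.mono x) = evalAt x f :=
    hf.sum_coeff_mul_mono x
  refine ⟨xstar, hxstar, (hobj xstar).symm, fun x hx => ?_⟩
  rw [← hobj, ← hobj]
  exact hopt _ (dnnFeasible_mono hx)

/-- **Exact Relaxation (Proposition 3.9).** If an optimal solution `y*` of the DNN relaxation
has a rank-one moment matrix, then the relaxation is tight: there is a point `x*` on the
nonnegative multi-sphere with `f(x*) = f_dnn`, which is a minimizer of `f` over the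
nonnegative multi-sphere. -/
theorem dnn_exact_relaxation (p : ℕ) (hp : 1 ≤ p)
    (n : Fin p → ℕ) (hn : ∀ i, 1 ≤ n i) (τ : Fin p → ℕ) (hτ : ∀ i, 1 ≤ τ i)
    (f : MvPolynomial (Σ i : Fin p, Fin (n i)) ℝ)
    (hf : IsMultiForm f (fun i => 2 * τ i))
    (ystar : Lam n (fun i => 2 * τ i) → ℝ)
    (hfeas : DNNFeasible τ ystar)
    (hopt : ∀ y, DNNFeasible τ y → DNNObj τ f ystar ≤ DNNObj τ f y)
    (hrank : (momentMatrix ystar).rank = 1) :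
    ∃ xstar : ∀ i : Fin p, Fin (n i) → ℝ, NonnegSphere xstar ∧
      evalAt xstar f = DNNObj τ f ystar ∧
      ∀ x : ∀ i : Fin p, Fin (n i) → ℝ, NonnegSphere x → evalAt xstar f ≤ evalAt x f :=
  dnn_exact_relaxation_general p n τ hτ f hf ystar hfeas hopt hrank
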